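/- Let $X$ be a Moishezon manifold with $c_1(X)=0$ whose tangent bundle $TX$ is semistable with respect to every movable class. Let $\alpha$ be a class in the interior of the movable cone and let $0=\mathcal F_0\subsetneq\mathcal F_1\subsetneq\cdots\subsetneq\mathcal F_r = TX$ be a filtration with torsion-free successive quotients stable of the same $\alpha$-slope. Then $c_1(\mathcal F_{i+1}/\mathcal F_i)\cdot\beta = 0$ for every movable class $\beta$ sufficiently close to $\alpha$, and hence $c_1(\mathcal F_{i+1}/\mathcal F_i)=0$ in $N^1(X)_{\mathbb R}$ for all $i$. -/

import Mathlib

/-!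
A linear functional that vanishes at `α` and is `≤ 0` on a ball around `α` takes opposite values
at `β` and at its reflection `2α - β`, so it vanishes on the whole ball. Applied to the partial
sums `c₁(𝓕_k)`, this makes every partial sum, hence every `c₁(𝓕_{i+1}/𝓕ᵢ)`, vanish near `α`;
a linear functional vanishing on an open set is zero.
-/

open Filter Topology Metric

theorem LinearMap.eq_zero_of_eventually_eq_zero {𝕜 E F : Type*} [NontriviallyNormedField 𝕜]
    [AddCommGroup E] [TopologicalSpace E] [ContinuousAdd E] [Module 𝕜 E] [ContinuousSMul 𝕜 E]
    [AddCommGroup F] [Module 𝕜 F] {f : E →ₗ[𝕜] F} {α : E} (h : ∀ᶠ β in 𝓝 α, f β = 0) :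
    f = 0 := by
  have hker : α ∈ interior (LinearMap.ker f : Set E) := mem_interior_iff_mem_nhds.mpr h
  exact LinearMap.ker_eq_top.mp (Submodule.eq_top_of_nonempty_interior' _ ⟨α, hker⟩)

theorem eq_zero_of_nonpos_on_ball {E F G : Type*} [SeminormedAddCommGroup E]
    [AddCommGroup G] [PartialOrder G] [IsOrderedAddMonoid G]
    [FunLike F E G] [AddMonoidHomClass F E G] {f : F} {α : E} {ε : ℝ}
    (hf : ∀ β ∈ ball α ε, f β ≤ 0) (hα : f α = 0) {β : E} (hβ : β ∈ ball α ε) : f β = 0 := by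
  have hrefl : α - (β - α) ∈ ball α ε := by
    rwa [mem_ball, dist_eq_norm, sub_sub_cancel_left, norm_neg, ← dist_eq_norm]
  have hneg : f (α - (β - α)) = -f β := by simp [map_sub, hα]
  exact le_antisymm (hf β hβ) (neg_nonpos.mp (hneg ▸ hf _ hrefl))

theorem Fin.eq_zero_of_sum_filter_lt_eq_zero {M : Type*} [AddCancelCommMonoid M] {r : ℕ}
    {x : Fin r → M} (h : ∀ k ≤ r, ∑ i ∈ Finset.univ.filter (fun i : Fin r => (i : ℕ) < k), x i = 0)
    (i : Fin r) : x i = 0 := by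
  have hfilter : Finset.univ.filter (fun j : Fin r => (j : ℕ) < i + 1)
      = insert i (Finset.univ.filter (fun j : Fin r => (j : ℕ) < i)) := by
    ext j
    simp only [Finset.mem_filter, Finset.mem_univ, true_and, Finset.mem_insert, Fin.ext_iff]
    omega
  have hsucc := h (i + 1) i.is_lt
  rwa [hfilter, Finset.sum_insert (by simp), h i i.is_lt.le, add_zero] at hsucc

theorem chern_classes_of_graded_pieces_vanish_general
    {N1 : Type*} [NormedAddCommGroup N1] [NormedSpace ℝ N1]
    (Mov : Set N1)
    (α : N1) (hα : α ∈ interior Mov)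
    (r : ℕ) (c : Fin r → (N1 →ₗ[ℝ] ℝ))
    -- semistability of `TX` w.r.t. every movable class, applied to the subsheaves `𝓕_k`:
    (hss : ∀ β ∈ Mov, ∀ k : ℕ, k ≤ r → ∑ i ∈ Finset.univ.filter (fun i : Fin r => (i : ℕ) < k), c i β ≤ 0)
    -- the graded pieces all have `α`-slope zero:
    (hα0 : ∀ i, c i α = 0) :
    (∃ ε > 0, ∀ β ∈ Mov, ‖β - α‖ < ε → ∀ i, c i β = 0) ∧ ∀ i, c i = 0 := by
  obtain ⟨ε, hε, hball⟩ := isOpen_iff.mp isOpen_interior α hα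
  have hnear : ∀ β ∈ ball α ε, ∀ i, c i β = 0 := fun β hβ =>
    Fin.eq_zero_of_sum_filter_lt_eq_zero fun k hk => by
      simpa only [LinearMap.coe_sum, Finset.sum_apply] using
        eq_zero_of_nonpos_on_ball (f := ∑ i ∈ Finset.univ.filter (fun i : Fin r => (i : ℕ) < k), c i)
          (fun γ hγ => by simpa using hss γ (interior_subset (hball hγ)) k hk) (by simp [hα0]) hβ
  refine ⟨⟨ε, hε, fun β _ hβ => hnear β (mem_ball_iff_norm.mpr hβ)⟩, fun i => ?_⟩
  exact LinearMap.eq_zero_of_eventually_eq_zero <|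
    eventually_of_mem (ball_mem_nhds α hε) fun β hβ => hnear β hβ i

theorem chern_classes_of_graded_pieces_vanish
    {N1 : Type*} [NormedAddCommGroup N1] [NormedSpace ℝ N1]
    [FiniteDimensional ℝ N1]
    (Mov : Set N1) (hcone : Convex ℝ Mov)
    (α : N1) (hα : α ∈ interior Mov)
    (r : ℕ) (c : Fin r → (N1 →ₗ[ℝ] ℝ))
    -- semistability of `TX` w.r.t. every movable class, applied to the subsheaves `𝓕_k`:
    (hss : ∀ β ∈ Mov, ∀ k : ℕ, k ≤ r → ∑ i ∈ Finset.univ.filter (fun i : Fin r => (i : ℕ) < k), c i β ≤ 0)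
    -- the graded pieces all have `α`-slope zero:
    (hα0 : ∀ i, c i α = 0) :
    (∃ ε > 0, ∀ β ∈ Mov, ‖β - α‖ < ε → ∀ i, c i β = 0) ∧ ∀ i, c i = 0 :=
  chern_classes_of_graded_pieces_vanish_general Mov α hα r c hss hα0
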